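/- Let c ∈ ℝ and let N, Ñ be independent standard normal random variables. Then E[ ( Ñ − max(N, c) )₊ ] = c·Φ(c)² − c·Φ(c) + 1/√π − (1/√π)·Φ(c·√2) + 2φ(c)Φ(c) − φ(c), where x₊ = max(x, 0) and Φ, φ denote the standard normal CDF and PDF. -/

import Mathlib

open MeasureTheory ProbabilityTheory Set

noncomputable section

/-- The standard normal distribution `N(0,1)` on `ℝ`. -/
def stdNormal : Measure ℝ := gaussianReal 0 1

/-- The standard normal CDF `Φ`. -/
def Phi (x : ℝ) : ℝ := (stdNormal (Iic x)).toReal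

/-- The standard normal PDF `φ`. -/
def stdPDF (x : ℝ) : ℝ := (Real.sqrt (2 * Real.pi))⁻¹ * Real.exp (-(x ^ 2) / 2)

/-- The CDF of the normal distribution `N(μ, σ²)`: `Φ_{μ,σ²}(u) = Φ((u - μ)/σ)`. -/
def normCDF (μ σ : ℝ) (u : ℝ) : ℝ := Phi ((u - μ) / σ)

/-- The normal distribution `N(μ, σ²)` as a measure on `ℝ`. -/
def gaussMeasure (μ σ : ℝ) : Measure ℝ := gaussianReal μ ⟨σ ^ 2, sq_nonneg σ⟩

/-- Threshold-weighted CRPS of a predictive CDF `F` at observation `y`, with weighting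
measure `γ`: `∫ (F u - 1{y ≤ u})² dγ(u)`. -/
def twCRPS (γ : Measure ℝ) (F : ℝ → ℝ) (y : ℝ) : ℝ :=
  ∫ u, (F u - (Ici y).indicator (fun _ => (1 : ℝ)) u) ^ 2 ∂γ

/-- Expected threshold-weighted CRPS of the Gaussian `N(μ, σ²)` with weighting measure `γ`:
the expectation of `y ↦ CRPS_γ(Φ_{μ,σ²}, y)` for `y ∼ N(μ, σ²)`. -/
def etwCRPS (γ : Measure ℝ) (μ σ : ℝ) : ℝ :=
  ∫ y, twCRPS γ (normCDF μ σ) y ∂(gaussMeasure μ σ)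

/-- `γ₁`: the Borel measure on `ℝ` with Lebesgue density `u ↦ 1{u ≥ t}`. -/
def gamma1 (t : ℝ) : Measure ℝ :=
  volume.withDensity ((Ici t).indicator fun _ => (1 : ENNReal))

/-- `γ₂`: the Borel measure on `ℝ` with Lebesgue density `u ↦ (1/σγ) φ((u - t)/σγ)`. -/
def gamma2 (t σγ : ℝ) : Measure ℝ :=
  volume.withDensity fun u => ENNReal.ofReal (1 / σγ * stdPDF ((u - t) / σγ))

end

noncomputable section
open Filter Topology Real
open scoped ENNReal NNReal

lemma stdPDF_eq (x : ℝ) : stdPDF x = gaussianPDFReal 0 1 x := by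
  simp [stdPDF, gaussianPDFReal, sub_zero]

lemma stdPDF_pos (x : ℝ) : 0 < stdPDF x := by
  rw [stdPDF_eq]; exact gaussianPDFReal_pos 0 1 x one_ne_zero

lemma stdPDF_nonneg (x : ℝ) : 0 ≤ stdPDF x := (stdPDF_pos x).le

lemma continuous_stdPDF : Continuous stdPDF := by
  unfold stdPDF
  fun_prop

lemma measurable_toNNReal_stdPDF : Measurable fun x => (stdPDF x).toNNReal :=
  (measurable_real_toNNReal.comp continuous_stdPDF.measurable)

lemma stdNormal_eq : stdNormal =
    volume.withDensity (fun x => ((stdPDF x).toNNReal : ℝ≥0∞)) := by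
  rw [stdNormal, gaussianReal_of_var_ne_zero 0 one_ne_zero]
  congr 1
  ext x
  rw [gaussianPDF, ← stdPDF_eq, ENNReal.ofReal]

lemma integral_stdNormal (g : ℝ → ℝ) :
    ∫ x, g x ∂stdNormal = ∫ x, stdPDF x * g x := by
  rw [stdNormal_eq, integral_withDensity_eq_integral_smul
    measurable_toNNReal_stdPDF g]
  congr 1; ext x
  simp [NNReal.smul_def, Real.coe_toNNReal _ (stdPDF_nonneg x)]

lemma integrable_stdNormal_iff (g : ℝ → ℝ) (hg : AEStronglyMeasurable g volume) :
    Integrable g stdNormal ↔ Integrable (fun x => stdPDF x * g x) volume := by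
  rw [stdNormal_eq, integrable_withDensity_iff_integrable_smul
    measurable_toNNReal_stdPDF]
  constructor <;> intro h <;> refine h.congr ?_ <;>
    (filter_upwards with x;
     simp [NNReal.smul_def, Real.coe_toNNReal _ (stdPDF_nonneg x)])

lemma integrable_stdPDF : Integrable stdPDF volume := by
  have := integrable_gaussianPDFReal 0 1
  exact this.congr (by filter_upwards with x; rw [stdPDF_eq])

lemma Phi_eq (c : ℝ) : Phi c = ∫ x in Iic c, stdPDF x := by
  rw [Phi, stdNormal, gaussianReal_apply_eq_integral 0 one_ne_zero,
    ENNReal.toReal_ofReal]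
  · simp_rw [← stdPDF_eq]
  · exact setIntegral_nonneg measurableSet_Iic fun x _ =>
      (gaussianPDFReal_nonneg 0 1 x)

lemma hasDerivAt_Phi (x : ℝ) : HasDerivAt Phi (stdPDF x) x := by
  have key : ∀ y : ℝ, Phi y = Phi 0 + ∫ t in (0:ℝ)..y, stdPDF t := by
    intro y
    have := intervalIntegral.integral_Iic_sub_Iic (μ := volume) (f := stdPDF)
      (a := 0) (b := y) integrable_stdPDF.integrableOn integrable_stdPDF.integrableOn
    rw [← Phi_eq, ← Phi_eq] at this
    linarith
  have h : HasDerivAt (fun u => ∫ t in (0:ℝ)..u, stdPDF t) (stdPDF x) x :=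
    intervalIntegral.integral_hasDerivAt_right
      integrable_stdPDF.intervalIntegrable
      (continuous_stdPDF.stronglyMeasurableAtFilter _ _)
      continuous_stdPDF.continuousAt
  have := h.const_add (Phi 0)
  exact this.congr_of_eventuallyEq (by filter_upwards with y; rw [key y])

instance : IsProbabilityMeasure stdNormal := by
  rw [stdNormal]; infer_instance

lemma Phi_tendsto_atTop : Tendsto Phi atTop (𝓝 1) := by
  have h := tendsto_measure_Iic_atTop stdNormal
  have : Tendsto (fun x => (stdNormal (Iic x)).toReal) atTop (𝓝 (stdNormal univ).toReal) :=
    (ENNReal.tendsto_toReal (measure_ne_top _ _)).comp h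
  exact (by simpa using this : Tendsto (fun x => (stdNormal (Iic x)).toReal) atTop (𝓝 1))

lemma stdPDF_tendsto_atTop : Tendsto stdPDF atTop (𝓝 0) := by
  have h1 : Tendsto (fun x : ℝ => -(x ^ 2) / 2) atTop atBot := by
    apply Tendsto.atBot_div_const two_pos
    simpa using (tendsto_pow_atTop (two_ne_zero)).neg
  have := Real.tendsto_exp_atBot.comp h1
  have h2 : Tendsto (fun x : ℝ => (Real.sqrt (2 * Real.pi))⁻¹ * Real.exp (-(x^2)/2)) atTop (𝓝 ((Real.sqrt (2*Real.pi))⁻¹ * 0)) :=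
    this.const_mul _
  have : stdPDF = fun x : ℝ => (Real.sqrt (2 * Real.pi))⁻¹ * Real.exp (-(x^2)/2) := rfl
  rw [this]
  simpa using h2

lemma hasDerivAt_neg_stdPDF (y : ℝ) :
    HasDerivAt (fun t => -stdPDF t) (y * stdPDF y) y := by
  have h1 : HasDerivAt (fun t : ℝ => -(t ^ 2) / 2) (-y) y := by
    have : HasDerivAt (fun t : ℝ => t ^ 2) (2 * y) y := by
      simpa using (hasDerivAt_pow 2 y)
    have := (this.neg).div_const 2
    simpa using this.congr_deriv (by ring)
  have h2 : HasDerivAt (fun t : ℝ => Real.exp (-(t ^ 2) / 2))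
      (Real.exp (-(y ^ 2) / 2) * (-y)) y := h1.exp
  have h3 := (h2.const_mul ((Real.sqrt (2 * Real.pi))⁻¹)).fun_neg
  have : stdPDF = fun t : ℝ => (Real.sqrt (2 * Real.pi))⁻¹ * Real.exp (-(t ^ 2) / 2) := rfl
  rw [this]
  refine h3.congr_deriv ?_
  beta_reduce; ring

lemma integrable_mul_stdPDF : Integrable (fun x => x * stdPDF x) volume := by
  have h := (integrable_mul_exp_neg_mul_sq (by norm_num : (0:ℝ) < 1/2)).const_mul
    ((Real.sqrt (2 * Real.pi))⁻¹)
  refine h.congr ?_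
  filter_upwards with x
  rw [stdPDF]; ring_nf

lemma integral_Ioi_mul_stdPDF (a : ℝ) :
    ∫ y in Ioi a, y * stdPDF y = stdPDF a := by
  have := integral_Ioi_of_hasDerivAt_of_tendsto' (a := a) (m := 0)
    (fun x _ => hasDerivAt_neg_stdPDF x)
    integrable_mul_stdPDF.integrableOn
    (by simpa using stdPDF_tendsto_atTop.neg)
  simpa using this

lemma integral_Ioi_stdPDF (a : ℝ) :
    ∫ y in Ioi a, stdPDF y = 1 - Phi a :=
  integral_Ioi_of_hasDerivAt_of_tendsto' (fun x _ => hasDerivAt_Phi x)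
    integrable_stdPDF.integrableOn Phi_tendsto_atTop

lemma inner_integral (a : ℝ) :
    ∫ y, max (y - a) 0 ∂stdNormal = stdPDF a - a * (1 - Phi a) := by
  rw [integral_stdNormal]
  have heq : (fun y => stdPDF y * max (y - a) 0)
      = (Ioi a).indicator (fun y => y * stdPDF y - a * stdPDF y) := by
    ext y
    rw [Set.indicator_apply]
    split_ifs with h
    · rw [mem_Ioi] at h
      rw [max_eq_left (by linarith)]
      ring
    · rw [mem_Ioi] at h
      rw [max_eq_right (by push_neg at h; linarith)]
      ring
  rw [heq, integral_indicator measurableSet_Ioi, integral_sub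
    (integrable_mul_stdPDF.integrableOn)
    ((integrable_stdPDF.integrableOn).const_mul a),
    integral_Ioi_mul_stdPDF, integral_const_mul, integral_Ioi_stdPDF]

lemma Phi_nonneg (x : ℝ) : 0 ≤ Phi x := ENNReal.toReal_nonneg

lemma Phi_le_one (x : ℝ) : Phi x ≤ 1 := by
  rw [Phi]
  have h := prob_le_one (μ := stdNormal) (s := Iic x)
  calc (stdNormal (Iic x)).toReal ≤ (1 : ℝ≥0∞).toReal :=
        ENNReal.toReal_mono (by simp) h
    _ = 1 := by simp

lemma continuous_Phi : Continuous Phi :=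
  continuous_iff_continuousAt.mpr fun x => (hasDerivAt_Phi x).continuousAt

lemma stdPDF_sq (x : ℝ) :
    stdPDF x * stdPDF x = (Real.sqrt (2 * Real.pi))⁻¹ * stdPDF (Real.sqrt 2 * x) := by
  simp only [stdPDF]
  rw [mul_pow, Real.sq_sqrt (by norm_num : (0:ℝ) ≤ 2)]
  have : -(x ^ 2) / 2 + -(x ^ 2) / 2 = -(2 * x ^ 2) / 2 := by ring
  rw [show (√(2 * π))⁻¹ * rexp (-x ^ 2 / 2) * ((√(2 * π))⁻¹ * rexp (-x ^ 2 / 2))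
      = (√(2 * π))⁻¹ * ((√(2 * π))⁻¹ * (rexp (-x ^ 2 / 2) * rexp (-x ^ 2 / 2))) from by ring,
    ← Real.exp_add, this]

lemma integral_Ioi_stdPDF_sq (c : ℝ) :
    ∫ x in Ioi c, stdPDF x * stdPDF x
      = (2 * Real.sqrt Real.pi)⁻¹ * (1 - Phi (Real.sqrt 2 * c)) := by
  have h2 : (0:ℝ) < Real.sqrt 2 := Real.sqrt_pos.mpr two_pos
  rw [show (fun x => stdPDF x * stdPDF x)
      = (fun x => (Real.sqrt (2 * Real.pi))⁻¹ * stdPDF (Real.sqrt 2 * x)) from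
      funext stdPDF_sq]
  rw [integral_const_mul, integral_comp_mul_left_Ioi (g := stdPDF) _ h2,
    integral_Ioi_stdPDF, smul_eq_mul]
  have : (Real.sqrt (2 * Real.pi))⁻¹ * (Real.sqrt 2)⁻¹ = (2 * Real.sqrt Real.pi)⁻¹ := by
    rw [← mul_inv]
    congr 1
    rw [Real.sqrt_mul (by norm_num : (0:ℝ) ≤ 2)]
    rw [show Real.sqrt 2 * Real.sqrt Real.pi * Real.sqrt 2
        = Real.sqrt 2 * Real.sqrt 2 * Real.sqrt Real.pi from by ring,
      Real.mul_self_sqrt (by norm_num : (0:ℝ) ≤ 2)]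
  rw [← mul_assoc, this]

lemma stdPDF_le (x : ℝ) : stdPDF x ≤ (Real.sqrt (2 * Real.pi))⁻¹ := by
  have h1 : Real.exp (-(x ^ 2) / 2) ≤ 1 := by
    rw [Real.exp_le_one_iff]
    nlinarith [sq_nonneg x]
  have h2 : (0:ℝ) ≤ (Real.sqrt (2 * Real.pi))⁻¹ := by positivity
  calc stdPDF x = (Real.sqrt (2 * Real.pi))⁻¹ * Real.exp (-(x ^ 2) / 2) := rfl
    _ ≤ (Real.sqrt (2 * Real.pi))⁻¹ * 1 := by nlinarith
    _ = _ := mul_one _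

lemma integrable_stdPDF_sq : Integrable (fun x => stdPDF x * stdPDF x) volume := by
  refine (integrable_stdPDF.const_mul ((Real.sqrt (2 * Real.pi))⁻¹)).mono'
    ((continuous_stdPDF.mul continuous_stdPDF).aestronglyMeasurable) ?_
  filter_upwards with x
  rw [Real.norm_eq_abs,
    abs_of_nonneg (mul_nonneg (stdPDF_nonneg x) (stdPDF_nonneg x))]
  exact mul_le_mul_of_nonneg_right (stdPDF_le x) (stdPDF_nonneg x)

lemma integrable_mul_Phi_stdPDF : Integrable (fun x => x * Phi x * stdPDF x) volume := by
  refine integrable_mul_stdPDF.abs.mono'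
    (((continuous_id.mul continuous_Phi).mul continuous_stdPDF).aestronglyMeasurable) ?_
  filter_upwards with x
  rw [Real.norm_eq_abs, abs_mul, abs_mul, abs_mul]
  have h1 : |Phi x| ≤ 1 := abs_le.mpr ⟨by linarith [Phi_nonneg x], Phi_le_one x⟩
  have h2 : (0:ℝ) ≤ |x| := abs_nonneg x
  have h3 : (0:ℝ) ≤ |stdPDF x| := abs_nonneg _
  calc |x| * |Phi x| * |stdPDF x| ≤ |x| * 1 * |stdPDF x| :=
        mul_le_mul_of_nonneg_right (mul_le_mul_of_nonneg_left h1 h2) h3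
    _ = |x| * |stdPDF x| := by ring

lemma hasDerivAt_neg_Phi_mul_stdPDF (x : ℝ) :
    HasDerivAt (fun t => -(Phi t * stdPDF t))
      (x * Phi x * stdPDF x - stdPDF x * stdPDF x) x := by
  have hstd : HasDerivAt stdPDF (-(x * stdPDF x)) x := by
    have := (hasDerivAt_neg_stdPDF x).neg
    simpa [Pi.neg_def] using this
  have := ((hasDerivAt_Phi x).fun_mul hstd).fun_neg
  refine this.congr_deriv ?_
  ring

lemma integral_Ioi_mul_Phi_stdPDF (c : ℝ) :
    ∫ x in Ioi c, x * Phi x * stdPDF x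
      = Phi c * stdPDF c + ∫ x in Ioi c, stdPDF x * stdPDF x := by
  have htend : Tendsto (fun t => -(Phi t * stdPDF t)) atTop (𝓝 0) := by
    have := (Phi_tendsto_atTop.mul stdPDF_tendsto_atTop).neg
    simpa using this
  have hint : IntegrableOn (fun x => x * Phi x * stdPDF x - stdPDF x * stdPDF x)
      (Ioi c) volume :=
    (integrable_mul_Phi_stdPDF.sub integrable_stdPDF_sq).integrableOn
  have key := integral_Ioi_of_hasDerivAt_of_tendsto' (a := c) (m := 0)
    (fun x _ => hasDerivAt_neg_Phi_mul_stdPDF x) hint htend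
  rw [integral_sub integrable_mul_Phi_stdPDF.integrableOn
    integrable_stdPDF_sq.integrableOn] at key
  simp only [zero_sub, neg_neg] at key
  linarith

lemma integrable_abs_stdNormal : Integrable (fun x => |x|) stdNormal := by
  rw [integrable_stdNormal_iff _ continuous_abs.aestronglyMeasurable]
  refine integrable_mul_stdPDF.abs.congr ?_
  filter_upwards with x
  rw [abs_mul, mul_comm |x|, abs_of_nonneg (stdPDF_nonneg x)]

lemma map_fst_std : (stdNormal.prod stdNormal).map Prod.fst = stdNormal := by
  rw [MeasureTheory.Measure.map_fst_prod]; simp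

lemma map_snd_std : (stdNormal.prod stdNormal).map Prod.snd = stdNormal := by
  rw [MeasureTheory.Measure.map_snd_prod]; simp

lemma integrable_abs_fst :
    Integrable (fun p : ℝ × ℝ => |p.1|) (stdNormal.prod stdNormal) := by
  have h := (integrable_map_measure (f := Prod.fst) (g := fun x : ℝ => |x|)
    (μ := stdNormal.prod stdNormal)
    (by rw [map_fst_std]; exact continuous_abs.aestronglyMeasurable)
    measurable_fst.aemeasurable).mp (by rw [map_fst_std]; exact integrable_abs_stdNormal)
  exact h

lemma integrable_abs_snd :
    Integrable (fun p : ℝ × ℝ => |p.2|) (stdNormal.prod stdNormal) := by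
  have h := (integrable_map_measure (f := Prod.snd) (g := fun x : ℝ => |x|)
    (μ := stdNormal.prod stdNormal)
    (by rw [map_snd_std]; exact continuous_abs.aestronglyMeasurable)
    measurable_snd.aemeasurable).mp (by rw [map_snd_std]; exact integrable_abs_stdNormal)
  exact h

lemma integrable_main (c : ℝ) :
    Integrable (fun p : ℝ × ℝ => max (p.2 - max p.1 c) 0)
      (stdNormal.prod stdNormal) := by
  have hbd : Integrable (fun p : ℝ × ℝ => |p.2| + |c|) (stdNormal.prod stdNormal) :=
    integrable_abs_snd.add (integrable_const _)
  refine hbd.mono'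
    ((continuous_snd.sub (continuous_fst.max continuous_const)).max
      continuous_const).aestronglyMeasurable ?_
  filter_upwards with p
  rw [Real.norm_eq_abs, abs_of_nonneg (le_max_right _ _)]
  have h1 : p.2 - max p.1 c ≤ |p.2| + |c| := by
    have : -|c| ≤ max p.1 c := le_trans (neg_abs_le c) (le_max_right _ _)
    have h2 : p.2 ≤ |p.2| := le_abs_self _
    linarith
  have h0 : (0:ℝ) ≤ |p.2| + |c| := by positivity
  exact max_le h1 h0


end

theorem stmt_8 (c : ℝ) :
    ∫ p : ℝ × ℝ, max (p.2 - max p.1 c) 0 ∂(stdNormal.prod stdNormal) =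
      c * Phi c ^ 2 - c * Phi c + 1 / Real.sqrt Real.pi
        - 1 / Real.sqrt Real.pi * Phi (c * Real.sqrt 2)
        + 2 * stdPDF c * Phi c - stdPDF c := by
  rw [integral_prod _ (integrable_main c)]
  simp only [inner_integral]
  rw [integral_stdNormal]
  set Gc : ℝ := stdPDF c - c * (1 - Phi c) with hGc
  set f : ℝ → ℝ :=
    fun x => stdPDF x * (stdPDF (max x c) - max x c * (1 - Phi (max x c))) with hf
  have heq1 : EqOn (fun x => stdPDF x * Gc) f (Iic c) := by
    intro x hx
    rw [mem_Iic] at hx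
    simp only [hf, max_eq_right hx, hGc]
  have heq2 : EqOn (fun x => stdPDF x * stdPDF x - x * stdPDF x + x * Phi x * stdPDF x)
      f (Ioi c) := by
    intro x hx
    rw [mem_Ioi] at hx
    simp only [hf, max_eq_left hx.le]
    ring
  have hi1 : IntegrableOn f (Iic c) volume :=
    ((integrable_stdPDF.mul_const Gc).integrableOn).congr_fun heq1 measurableSet_Iic
  have hi2 : IntegrableOn f (Ioi c) volume :=
    (((integrable_stdPDF_sq.sub integrable_mul_stdPDF).add
      integrable_mul_Phi_stdPDF).integrableOn).congr_fun heq2 measurableSet_Ioi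
  rw [← intervalIntegral.integral_Iic_add_Ioi hi1 hi2]
  have h1 : ∫ x in Iic c, f x = Phi c * Gc := by
    rw [← setIntegral_congr_fun measurableSet_Iic heq1, integral_mul_const, ← Phi_eq]
  have h2 : ∫ x in Ioi c, f x
      = ((2 * Real.sqrt Real.pi)⁻¹ * (1 - Phi (Real.sqrt 2 * c)) - stdPDF c)
        + (Phi c * stdPDF c + (2 * Real.sqrt Real.pi)⁻¹ * (1 - Phi (Real.sqrt 2 * c))) := by
    rw [← setIntegral_congr_fun measurableSet_Ioi heq2,
      integral_add (f := fun x => stdPDF x * stdPDF x - x * stdPDF x)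
        (g := fun x => x * Phi x * stdPDF x)
        ((integrable_stdPDF_sq.sub integrable_mul_stdPDF).integrableOn)
        integrable_mul_Phi_stdPDF.integrableOn,
      integral_sub (f := fun x => stdPDF x * stdPDF x) (g := fun x => x * stdPDF x)
        integrable_stdPDF_sq.integrableOn integrable_mul_stdPDF.integrableOn,
      integral_Ioi_stdPDF_sq, integral_Ioi_mul_stdPDF, integral_Ioi_mul_Phi_stdPDF,
      integral_Ioi_stdPDF_sq]
  rw [h1, h2, hGc]
  have hc2 : Real.sqrt 2 * c = c * Real.sqrt 2 := mul_comm _ _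
  rw [hc2]
  have hπ : (0:ℝ) < Real.sqrt Real.pi := Real.sqrt_pos.mpr Real.pi_pos
  field_simp
  ring
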